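/- Let U ⊆ ℝ^N be open, α a smooth 1-form on U, Z a smooth vector field on U with i_Z dα = 0 (i.e., dα(x)(Z(x), v) = 0 for all x, v), β a closed smooth 1-form on U, f : U → ℝ smooth, and ζ a smooth vector field with L_ζ(α + β) = df. Then the function J(x) = (α+β)(x)(ζ(x)) − f(x) is a first integral of the equation ẋ = Z: dJ(x)(Z(x)) = 0 for all x ∈ U. -/

import Mathlib

noncomputable section
open scoped ContDiff

/-- The Lie derivative of a 1-form `α` on `ℝ^N` along a vector field `ζ`:
`(L_ζ α)(x)(v) = (Dα(x)(ζ(x)))(v) + α(x)(Dζ(x)(v))`. -/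
def lieDerivV {N : ℕ} (ζ : (Fin N → ℝ) → (Fin N → ℝ))
    (α : (Fin N → ℝ) → ((Fin N → ℝ) →L[ℝ] ℝ)) (x : Fin N → ℝ) :
    (Fin N → ℝ) →L[ℝ] ℝ :=
  fderiv ℝ α x (ζ x) + (α x).comp (fderiv ℝ ζ x)

/-- The exterior derivative of a 1-form on `ℝ^N`:
`dα(x)(u,v) = (Dα(x)u)(v) − (Dα(x)v)(u)`. -/
def extDerivV {N : ℕ} (α : (Fin N → ℝ) → ((Fin N → ℝ) →L[ℝ] ℝ)) (x u v : Fin N → ℝ) : ℝ :=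
  fderiv ℝ α x u v - fderiv ℝ α x v u

/-! Cartan's formula `d(i_ζ γ) = L_ζ γ - i_ζ dγ` turns `dJ(Z)` into
`(L_ζ γ - df)(Z) + dγ(Z, ζ)` for `γ = α + β`. The first term vanishes by the symmetry
condition, and `dγ(Z, ζ) = dα(Z, ζ) + dβ(Z, ζ) = 0` because `Z` lies in the kernel of `dα`
and `β` is closed. -/

section

variable {N : ℕ} {x : Fin N → ℝ}

theorem extDerivV_add {α β : (Fin N → ℝ) → ((Fin N → ℝ) →L[ℝ] ℝ)}
    (hα : DifferentiableAt ℝ α x) (hβ : DifferentiableAt ℝ β x) (u v : Fin N → ℝ) :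
    extDerivV (fun y => α y + β y) x u v = extDerivV α x u v + extDerivV β x u v := by
  simp only [extDerivV, fderiv_fun_add hα hβ, add_apply]
  ring

theorem fderiv_contract_apply_eq_lieDerivV_add_extDerivV
    {γ : (Fin N → ℝ) → ((Fin N → ℝ) →L[ℝ] ℝ)} {ζ : (Fin N → ℝ) → (Fin N → ℝ)}
    (hγ : DifferentiableAt ℝ γ x) (hζ : DifferentiableAt ℝ ζ x) (w : Fin N → ℝ) :
    fderiv ℝ (fun y => γ y (ζ y)) x w = lieDerivV ζ γ x w + extDerivV γ x w (ζ x) := by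
  simp only [fderiv_clm_apply hγ hζ, lieDerivV, extDerivV, add_apply,
    ContinuousLinearMap.comp_apply, ContinuousLinearMap.flip_apply]
  ring

end

theorem weak_noether_first_integral_char_bundle_general {N : ℕ}
    (U : Set (Fin N → ℝ)) (hU : IsOpen U)
    (α β : (Fin N → ℝ) → ((Fin N → ℝ) →L[ℝ] ℝ))
    (Z ζ : (Fin N → ℝ) → (Fin N → ℝ)) (f : (Fin N → ℝ) → ℝ)
    (hα : ContDiffOn ℝ ∞ α U) (hβ : ContDiffOn ℝ ∞ β U)
    (hζ : ContDiffOn ℝ ∞ ζ U) (hf : ContDiffOn ℝ ∞ f U)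
    (hZker : ∀ x ∈ U, ∀ v, extDerivV α x (Z x) v = 0)
    (hβclosed : ∀ x ∈ U, ∀ u v, extDerivV β x u v = 0)
    (hsym : ∀ x ∈ U, lieDerivV ζ (fun y => α y + β y) x = fderiv ℝ f x) :
    ∀ x ∈ U, fderiv ℝ (fun y => (α y + β y) (ζ y) - f y) x (Z x) = 0 := by
  intro x hx
  have hdiff {E : Type} [NormedAddCommGroup E] [NormedSpace ℝ E] {g : (Fin N → ℝ) → E}
      (hg : ContDiffOn ℝ ∞ g U) : DifferentiableAt ℝ g x :=
    (hg.contDiffAt (hU.mem_nhds hx)).differentiableAt (by simp)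
  have hγ : DifferentiableAt ℝ (fun y => α y + β y) x := (hdiff hα).add (hdiff hβ)
  rw [fderiv_fun_sub (hγ.clm_apply (hdiff hζ)) (hdiff hf), sub_apply,
    fderiv_contract_apply_eq_lieDerivV_add_extDerivV hγ (hdiff hζ), hsym x hx,
    extDerivV_add (hdiff hα) (hdiff hβ), hZker x hx, hβclosed x hx]
  ring

/-- if `Z` is a section of the characteristic line bundle of `dα`
(`i_Z dα = 0` on `U`) and `ζ` is a weak Noether symmetry (`L_ζ(α + β) = df` on `U`,
`β` closed), then `J(x) = (α+β)(x)(ζ(x)) − f(x)` is a first integral of `ẋ = Z`. -/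
theorem weak_noether_first_integral_char_bundle {N : ℕ} (hN : 1 ≤ N)
    (U : Set (Fin N → ℝ)) (hU : IsOpen U)
    (α β : (Fin N → ℝ) → ((Fin N → ℝ) →L[ℝ] ℝ))
    (Z ζ : (Fin N → ℝ) → (Fin N → ℝ)) (f : (Fin N → ℝ) → ℝ)
    (hα : ContDiffOn ℝ ∞ α U) (hβ : ContDiffOn ℝ ∞ β U)
    (hZ : ContDiffOn ℝ ∞ Z U) (hζ : ContDiffOn ℝ ∞ ζ U) (hf : ContDiffOn ℝ ∞ f U)
    (hZker : ∀ x ∈ U, ∀ v, extDerivV α x (Z x) v = 0)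
    (hβclosed : ∀ x ∈ U, ∀ u v, extDerivV β x u v = 0)
    (hsym : ∀ x ∈ U, lieDerivV ζ (fun y => α y + β y) x = fderiv ℝ f x) :
    ∀ x ∈ U, fderiv ℝ (fun y => (α y + β y) (ζ y) - f y) x (Z x) = 0 :=
  weak_noether_first_integral_char_bundle_general U hU α β Z ζ f hα hβ hζ hf hZker hβclosed hsym
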